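/- arXiv:2509.16657 — 2 statements merged into one kernel-verified Lean document; each statement's English description precedes it below -/
import Mathlib

section
/- Let G = C(α₁,...,α_{2k}) with k ≥ 2 and α_{2k} ≥ 2, and let n = α₁ + ... + α_{2k}. Then -2 is an eigenvalue of the eccentricity matrix ε(G) with multiplicity at least (α₂ + α₄ + ... + α_{2k}) - k. -/
open Finset Matrix

/-- The cograph `C(α₁,…,α_l)` obtained by the recursive construction
`C(α₁) = complement of K_{α₁}` and
`C(α₁,…,αᵢ) = complement of (C(α₁,…,αᵢ₋₁) ⊔ K_{αᵢ})`,
presented by its resulting explicit adjacency relation: two distinct vertices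
in the same (0-based) block `i` are adjacent iff `l - 1 - i` is odd, and
vertices in different blocks `a < b` are adjacent iff `l - 1 - b` is even. -/
def Cgraph (l : ℕ) (α : Fin l → ℕ) : SimpleGraph (Σ i : Fin l, Fin (α i)) where
  Adj u v := u ≠ v ∧ ((u.1 = v.1 ∧ Odd (l - 1 - u.1.val)) ∨
      (u.1 ≠ v.1 ∧ Even (l - 1 - max u.1.val v.1.val)))
  symm := ⟨by
    rintro u v ⟨h1, h2⟩
    refine ⟨h1.symm, ?_⟩
    rcases h2 with ⟨he, ho⟩ | ⟨hne, hev⟩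
    · exact Or.inl ⟨he.symm, he ▸ ho⟩
    · exact Or.inr ⟨hne.symm, by rwa [max_comm]⟩⟩
  loopless := ⟨by rintro u ⟨h, -⟩; exact h rfl⟩

/-- The eccentricity of a vertex: the largest distance from it to any vertex. -/
noncomputable def ecc {V : Type*} [Fintype V] (G : SimpleGraph V) (v : V) : ℕ :=
  Finset.univ.sup fun u => G.dist v u

/-- The eccentricity matrix: entry `d(u,v)` if `d(u,v) = min (e u) (e v)`, else `0`. -/
noncomputable def eccMatrix {V : Type*} [Fintype V] (G : SimpleGraph V) :
    Matrix V V ℝ :=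
  Matrix.of fun u v =>
    if G.dist u v = min (ecc G u) (ecc G v) then (G.dist u v : ℝ) else 0

/-- Geometric multiplicity of `μ` as an eigenvalue of `M`. -/
noncomputable def eigMult {n : Type*} [Fintype n] [DecidableEq n]
    (M : Matrix n n ℝ) (μ : ℝ) : ℕ :=
  Module.finrank ℝ (LinearMap.ker (Matrix.toLin' (M - μ • (1 : Matrix n n ℝ))))

/-!
Every vertex of the last block of `C(α₁,…,α_l)` is adjacent to all vertices outside that
block, so the graph has diameter at most `2`. Two vertices `a ≠ b` of a block without
internal edges have the same neighbourhood; then `d(a, b) = 2 = e(a) = e(b)`, and the columns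
`a` and `b` of `ε(G) + 2I` coincide. For `l = 2k` these blocks are `V₂, V₄, …, V_{2k}`, so
`ε(G) + 2I` has at most `n - (α₂ + α₄ + ⋯ + α_{2k}) + k` distinct columns; this bounds its
rank, and rank–nullity bounds the multiplicity of `-2`.
-/

open SimpleGraph

namespace Matrix

theorem rank_le_card_of_forall_exists_col_eq {m n ι R : Type*} [Fintype n] [Fintype ι]
    [CommRing R] [StrongRankCondition R] (A : Matrix m n R) (g : ι → n)
    (h : ∀ j, ∃ i, A.col j = A.col (g i)) : A.rank ≤ Fintype.card ι := by
  have := Module.Finite.span_of_finite R (Set.finite_range (A.col ∘ g))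
  rw [rank_eq_finrank_span_cols]
  calc Module.finrank R (Submodule.span R (Set.range A.col))
      ≤ Module.finrank R (Submodule.span R (Set.range (A.col ∘ g))) := by
        refine Submodule.finrank_mono (Submodule.span_mono ?_)
        rintro _ ⟨j, rfl⟩
        obtain ⟨i, hi⟩ := h j
        exact ⟨i, hi.symm⟩
    _ ≤ Fintype.card ι := finrank_range_le_card _

end Matrix

theorem eigMult_add_rank {n : Type*} [Fintype n] [DecidableEq n] (M : Matrix n n ℝ) (μ : ℝ) :
    eigMult M μ + (M - μ • 1).rank = Fintype.card n := by
  rw [eigMult, Matrix.rank, Matrix.toLin'_apply', add_comm,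
    LinearMap.finrank_range_add_finrank_ker, Module.finrank_fintype_fun_eq_card]

namespace SimpleGraph

variable {V : Type*} {G : SimpleGraph V} {u v w : V}

theorem dist_le_two_of_ediam_le_two (h : G.ediam ≤ 2) (u v : V) : G.dist u v ≤ 2 :=
  ENat.toNat_le_of_le_natCast (edist_le_ediam.trans h)

theorem dist_eq_two_of_ediam_le_two (h : G.ediam ≤ 2) (hne : u ≠ v) (hna : ¬G.Adj u v) :
    G.dist u v = 2 := by
  have hr : G.Reachable u v := edist_ne_top_iff_reachable.mp
    (ne_top_of_le_ne_top (by decide) (edist_le_ediam.trans h))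
  have hpos := hr.pos_dist_of_ne hne
  have hne1 : G.dist u v ≠ 1 := fun h1 => hna (dist_eq_one_iff_adj.mp h1)
  have := dist_le_two_of_ediam_le_two h u v
  omega

theorem dist_eq_of_forall_adj_iff (h : G.ediam ≤ 2) {a b : V}
    (hab : ∀ w, G.Adj w a ↔ G.Adj w b) (hwa : w ≠ a) (hwb : w ≠ b) :
    G.dist w a = G.dist w b := by
  by_cases hw : G.Adj w a
  · rw [dist_eq_one_iff_adj.mpr hw, dist_eq_one_iff_adj.mpr ((hab w).mp hw)]
  · rw [dist_eq_two_of_ediam_le_two h hwa hw,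
      dist_eq_two_of_ediam_le_two h hwb (mt (hab w).mpr hw)]

variable [Fintype V]

theorem ecc_eq_two_of_ediam_le_two (h : G.ediam ≤ 2) (hne : u ≠ v) (hna : ¬G.Adj u v) :
    ecc G u = 2 :=
  le_antisymm (Finset.sup_le fun w _ => dist_le_two_of_ediam_le_two h u w)
    ((dist_eq_two_of_ediam_le_two h hne hna).symm.le.trans (Finset.le_sup (Finset.mem_univ v)))

theorem col_eccMatrix_sub_neg_two_eq [DecidableEq V] (h : G.ediam ≤ 2) {a b : V}
    (hab : ∀ w, G.Adj w a ↔ G.Adj w b) :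
    (eccMatrix G - (-2 : ℝ) • 1).col a = (eccMatrix G - (-2 : ℝ) • 1).col b := by
  by_cases hne : a = b
  · rw [hne]
  have hna : ¬G.Adj a b := fun h' => G.irrefl ((hab a).mpr h')
  have hd : G.dist a b = 2 := dist_eq_two_of_ediam_le_two h hne hna
  have hea : ecc G a = 2 := ecc_eq_two_of_ediam_le_two h hne hna
  have heb : ecc G b = 2 := ecc_eq_two_of_ediam_le_two h (Ne.symm hne) (fun h' => hna h'.symm)
  funext w
  by_cases hwa : w = a
  · subst hwa
    simp [eccMatrix, hd, hea, heb, hne]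
  by_cases hwb : w = b
  · subst hwb
    simp [eccMatrix, dist_comm, hd, hea, heb, Ne.symm hne]
  simp [eccMatrix, dist_eq_of_forall_adj_iff h hab hwa hwb, hea, heb, hwa, hwb]

end SimpleGraph

section Cgraph

variable {l : ℕ} {α : Fin l → ℕ}

theorem Cgraph_adj_of_fst_val_eq_sub_one {u v : Σ i : Fin l, Fin (α i)} (hu : u.1.val = l - 1)
    (hv : v.1 ≠ u.1) : (Cgraph l α).Adj u v :=
  ⟨fun h => hv (congrArg Sigma.fst h).symm,
    Or.inr ⟨hv.symm, Nat.even_iff.mpr (by have := v.1.isLt; omega)⟩⟩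

theorem Cgraph_adj_iff_of_fst_eq {a b : Σ i : Fin l, Fin (α i)} (hab : a.1 = b.1)
    (ha : Even (l - 1 - a.1.val)) (w : Σ i : Fin l, Fin (α i)) :
    (Cgraph l α).Adj w a ↔ (Cgraph l α).Adj w b := by
  have key : ∀ c : Σ i : Fin l, Fin (α i), c.1 = a.1 →
      ((Cgraph l α).Adj w c ↔ w.1 ≠ a.1 ∧ Even (l - 1 - max w.1.val a.1.val)) := by
    intro c hc
    change w ≠ c ∧ _ ↔ _
    rw [hc]
    constructor
    · rintro ⟨-, ⟨hwc, hodd⟩ | hne⟩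
      · exact absurd ha (Nat.not_even_iff_odd.mpr (hwc ▸ hodd))
      · exact hne
    · rintro ⟨hwc, hev⟩
      exact ⟨fun h => hwc (h ▸ hc), Or.inr ⟨hwc, hev⟩⟩
  rw [key a rfl, key b hab.symm]

theorem Cgraph_ediam_le_two (hl : l ≠ 1) (hα : ∀ i, 1 ≤ α i) : (Cgraph l α).ediam ≤ 2 := by
  refine ediam_le_of_edist_le fun u v => ?_
  by_cases huv : u = v
  · simp [huv]
  by_cases hadj : (Cgraph l α).Adj u v
  · simp [edist_eq_one_iff_adj.mpr hadj]
  suffices ∃ w, (Cgraph l α).Adj u w ∧ (Cgraph l α).Adj w v by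
    obtain ⟨w, huw, hwv⟩ := this
    exact (edist_le (.cons huw (.cons hwv .nil))).trans (by simp)
  have hl : 2 ≤ l := by have := u.1.isLt; omega
  by_cases hu : u.1.val = l - 1 <;> by_cases hv : v.1.val = l - 1
  · refine ⟨⟨⟨0, by omega⟩, ⟨0, hα _⟩⟩, ?_, ?_⟩
    · exact Cgraph_adj_of_fst_val_eq_sub_one hu (fun h => by simp [Fin.ext_iff] at h; omega)
    · exact (Cgraph_adj_of_fst_val_eq_sub_one hv
        (fun h => by simp [Fin.ext_iff] at h; omega)).symm
  · exact absurd (Cgraph_adj_of_fst_val_eq_sub_one hu (fun h => hv (h ▸ hu))) hadj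
  · exact absurd (Cgraph_adj_of_fst_val_eq_sub_one hv (fun h => hu (h ▸ hv))).symm hadj
  · refine ⟨⟨⟨l - 1, by omega⟩, ⟨0, hα _⟩⟩, ?_, ?_⟩
    · exact (Cgraph_adj_of_fst_val_eq_sub_one rfl (fun h => hu (by rw [h]))).symm
    · exact Cgraph_adj_of_fst_val_eq_sub_one rfl (fun h => hv (by rw [h]))

end Cgraph

theorem Fin.card_filter_val_mod_two_eq_one (k : ℕ) : #{i : Fin (2 * k) | i.val % 2 = 1} = k := by
  conv_rhs => rw [← Fintype.card_fin k, ← Finset.card_univ]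
  symm
  refine Finset.card_nbij' (fun j => ⟨2 * j + 1, by omega⟩) (fun i => ⟨i / 2, by omega⟩)
    ?_ ?_ ?_ ?_ <;> intro x hx <;> simp [Fin.ext_iff] at hx ⊢ <;> omega

/-- The paper's blocks `V₂, V₄, …, V_{2k}` are the blocks with odd 0-based index. -/
theorem stmt4_general (k : ℕ) (α : Fin (2*k) → ℕ) (hα : ∀ i, 1 ≤ α i) :
    (∑ i ∈ Finset.univ.filter (fun i : Fin (2*k) => i.val % 2 = 1), α i) - k ≤
      eigMult (eccMatrix (Cgraph (2*k) α)) (-2) := by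
  set M := eccMatrix (Cgraph (2*k) α) - (-2 : ℝ) • 1
  let β : Fin (2*k) → ℕ := fun i => if i.val % 2 = 1 then 1 else α i
  have hβ : ∀ i, β i ≤ α i := fun i => by dsimp only [β]; split_ifs <;> simp [hα i]
  have hcol : ∀ a, ∃ p : Σ i, Fin (β i), M.col a = M.col ⟨p.1, Fin.castLE (hβ p.1) p.2⟩ := by
    rintro ⟨i, t⟩
    by_cases hi : i.val % 2 = 1
    · refine ⟨⟨i, ⟨0, by simp [β, hi]⟩⟩, col_eccMatrix_sub_neg_two_eq
        (Cgraph_ediam_le_two (by omega) hα) (Cgraph_adj_iff_of_fst_eq rfl ?_)⟩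
      exact Nat.even_iff.mpr (show (2 * k - 1 - i.val) % 2 = 0 by have := i.isLt; omega)
    · exact ⟨⟨i, ⟨t, by simp [β, hi]⟩⟩, rfl⟩
  have hrank := M.rank_le_card_of_forall_exists_col_eq _ hcol
  have hmult : eigMult (eccMatrix (Cgraph (2*k) α)) (-2) + M.rank = _ :=
    eigMult_add_rank (eccMatrix (Cgraph (2*k) α)) (-2)
  have hβsum : ∑ i, β i = k + ∑ i with ¬i.val % 2 = 1, α i := by
    rw [Finset.sum_ite, Finset.sum_const, Fin.card_filter_val_mod_two_eq_one, smul_eq_mul,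
      mul_one]
  have hαsum := Finset.sum_filter_add_sum_filter_not univ (fun i : Fin (2*k) => i.val % 2 = 1) α
  simp only [Fintype.card_sigma, Fintype.card_fin] at hrank hmult
  omega

/-- For `G = C(α₁,…,α_{2k})` with `k ≥ 2`, `α_{2k} ≥ 2`, `-2` is an eigenvalue
of `ε(G)` with multiplicity at least `α₂ + α₄ + ⋯ + α_{2k} - k` (even-indexed
blocks of the paper are the 0-based odd indices here). -/
theorem stmt4 (k : ℕ) (hk : 2 ≤ k) (α : Fin (2*k) → ℕ) (hα : ∀ i, 1 ≤ α i)
    (j : Fin (2*k)) (hj : j.val = 2*k - 1) (hlast : 2 ≤ α j) :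
    (∑ i ∈ Finset.univ.filter (fun i : Fin (2*k) => i.val % 2 = 1), α i) - k ≤
      eigMult (eccMatrix (Cgraph (2*k) α)) (-2) :=
  stmt4_general k α hα
end

section
/- Let Q̃ be the (2k-1)×(2k-1) quotient matrix of the eccentricity matrix of G = C(α₁,...,α_{2k}) (k ≥ 2, all α_i ≥ 1). Then -2 is not an eigenvalue of Q̃; equivalently, Q̃ + 2I is nonsingular. -/
open Finset Matrix

/-- The quotient matrix `Q̃` of the eccentricity matrix of `C(α₁,…,α_{2k})`
with respect to the first `2k-1` blocks (indices here are 0-based; the paper's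
row/column `r` is `r-1` here, so paper-odd rows correspond to even `i`). -/
noncomputable def Qtilde (k : ℕ) (α : Fin (2*k) → ℕ) :
    Matrix (Fin (2*k-1)) (Fin (2*k-1)) ℝ :=
  Matrix.of fun i j =>
    let a : Fin (2*k-1) → ℝ := fun m => (α (Fin.castLE (by omega) m) : ℝ)
    if i.val % 2 = 0 then
      if j.val % 2 = 0 then (if i = j then 0 else 2 * a j)
      else (if j.val < i.val then 2 * a j else 0)
    else
      if i = j then 2 * (a i - 1)
      else if j.val % 2 = 0 ∧ i.val < j.val then 2 * a j else 0

/-! Let `x` lie in the kernel of `Q̃ + 2I` and put `b t = α_{2t}`, `u t = x_{2t}`,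
`z t = α_{2t+1} x_{2t+1}` (0-based). Subtracting consecutive rows of equal parity leaves the
three-term relations `u 0 = z 0`, `(b t - 1) u t + z t = (b (t+1) - 1) u (t+1)` and
`z (t+1) = z t + b (t+1) u (t+1)`, with `z` vanishing one step past the last block.
Along them the energy `((b t - 1) u t + z t) z t` starts at `b 0 u 0 ^ 2` and ends at `0`,
and each step raises it by `z (t+1) ^ 2 + (b (t+1) - 1) b (t+1) u (t+1) ^ 2 ≥ 0`.
As every `α i ≥ 1`, all these terms vanish, hence `x = 0`. -/

section CoupledRecurrence

variable {N : ℕ} {b u z : ℕ → ℝ}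

lemma mul_sq_add_sum_eq_zero_of_recurrence (h0 : u 0 = z 0)
    (hu : ∀ t < N, (b t - 1) * u t + z t = (b (t + 1) - 1) * u (t + 1))
    (hz : ∀ t < N, z (t + 1) = z t + b (t + 1) * u (t + 1)) (hzN : z N = 0) :
    b 0 * u 0 ^ 2 +
      ∑ t ∈ range N, (z (t + 1) ^ 2 + (b (t + 1) - 1) * b (t + 1) * u (t + 1) ^ 2) = 0 := by
  set E : ℕ → ℝ := fun t => ((b t - 1) * u t + z t) * z t
  have hstep : ∀ t < N, E (t + 1) - E t =
      z (t + 1) ^ 2 + (b (t + 1) - 1) * b (t + 1) * u (t + 1) ^ 2 := fun t ht => by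
    linear_combination -z t * hu t ht + (b (t + 1) - 1) * u (t + 1) * hz t ht
  rw [← sum_congr rfl fun t ht => hstep t (mem_range.1 ht), sum_range_sub]
  simp only [E, hzN, h0]
  ring

theorem eq_zero_of_coupled_recurrence (hb : ∀ t ≤ N, 1 ≤ b t) (h0 : u 0 = z 0)
    (hu : ∀ t < N, (b t - 1) * u t + z t = (b (t + 1) - 1) * u (t + 1))
    (hz : ∀ t < N, z (t + 1) = z t + b (t + 1) * u (t + 1)) (hzN : z N = 0) :
    ∀ t ≤ N, u t = 0 ∧ z t = 0 := by
  have hsum := mul_sq_add_sum_eq_zero_of_recurrence h0 hu hz hzN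
  have hdiss : ∀ t < N, 0 ≤ (b (t + 1) - 1) * b (t + 1) * u (t + 1) ^ 2 := fun t ht =>
    have := hb (t + 1) ht
    mul_nonneg (mul_nonneg (by linarith) (by linarith)) (sq_nonneg _)
  have hterm : ∀ t ∈ range N,
      0 ≤ z (t + 1) ^ 2 + (b (t + 1) - 1) * b (t + 1) * u (t + 1) ^ 2 := fun t ht =>
    add_nonneg (sq_nonneg _) (hdiss t (mem_range.1 ht))
  have hb0 := hb 0 N.zero_le
  obtain ⟨hu0, hterm0⟩ := (add_eq_zero_iff_of_nonneg (by positivity) (sum_nonneg hterm)).1 hsum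
  replace hu0 : u 0 = 0 := by simpa [(by linarith : b 0 ≠ 0)] using hu0
  have hz0 : ∀ t ≤ N, z t = 0
    | 0, _ => h0 ▸ hu0
    | t + 1, ht => pow_eq_zero_iff two_ne_zero |>.1 <| by
      linarith [(sum_eq_zero_iff_of_nonneg hterm).1 hterm0 t (mem_range.2 ht), hdiss t ht,
        sq_nonneg (z (t + 1))]
  refine fun t ht => ⟨?_, hz0 t ht⟩
  rcases t with _ | t
  · exact hu0
  · have hbu : b (t + 1) * u (t + 1) = 0 := by
      linear_combination -hz t ht + hz0 (t + 1) ht - hz0 t (by omega)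
    exact (mul_eq_zero.1 hbu).resolve_left (zero_lt_one.trans_le (hb (t + 1) ht)).ne'

end CoupledRecurrence

lemma extend_val_eq_zero_of_le {R : Type*} [Zero R] {n m : ℕ} (f : Fin n → R) (h : n ≤ m) :
    Function.extend Fin.val f 0 m = 0 :=
  Function.extend_apply' _ _ _ (by rintro ⟨i, rfl⟩; omega)

namespace Qtilde

def addTwoEntry (a : ℕ → ℝ) (i j : ℕ) : ℝ :=
  if i % 2 = 0 then
    if j % 2 = 0 then (if i = j then 2 else 2 * a j) else (if j < i then 2 * a j else 0)
  else if i = j then 2 * a i else if j % 2 = 0 ∧ i < j then 2 * a j else 0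

section RowDifferences

variable (a : ℕ → ℝ) (j : ℕ)

lemma addTwoEntry_zero_sub_one :
    addTwoEntry a 0 j - addTwoEntry a 1 j =
      (if j = 0 then 2 else 0) - (if j = 1 then 2 * a 1 else 0) := by
  unfold addTwoEntry
  split_ifs <;> subst_vars <;> first | ring1 | omega | contradiction

lemma addTwoEntry_even_sub (t : ℕ) :
    addTwoEntry a (2 * t + 2) j - addTwoEntry a (2 * t) j =
      (if j = 2 * t then 2 * (a (2 * t) - 1) else 0) +
        (if j = 2 * t + 1 then 2 * a (2 * t + 1) else 0) +
        (if j = 2 * t + 2 then 2 * (1 - a (2 * t + 2)) else 0) := by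
  unfold addTwoEntry
  split_ifs <;> subst_vars <;> first | ring1 | omega

lemma addTwoEntry_odd_sub (t : ℕ) :
    addTwoEntry a (2 * t + 1) j - addTwoEntry a (2 * t + 3) j =
      (if j = 2 * t + 1 then 2 * a (2 * t + 1) else 0) +
        (if j = 2 * t + 2 then 2 * a (2 * t + 2) else 0) -
        (if j = 2 * t + 3 then 2 * a (2 * t + 3) else 0) := by
  unfold addTwoEntry
  split_ifs <;> subst_vars <;> first | ring1 | omega

end RowDifferences

section Kernel

variable {a x : ℕ → ℝ} {n : ℕ}

lemma sum_range_sub_mul_eq_zero (hrow : ∀ i < n, ∑ j ∈ range n, addTwoEntry a i j * x j = 0)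
    {i i' : ℕ} (hi : i < n) (hi' : i' < n) :
    ∑ j ∈ range n, (addTwoEntry a i j - addTwoEntry a i' j) * x j = 0 := by
  simp only [sub_mul, sum_sub_distrib, hrow i hi, hrow i' hi', sub_self]

lemma kernel_zero_eq (hrow : ∀ i < n, ∑ j ∈ range n, addTwoEntry a i j * x j = 0)
    (h : 1 < n) : x 0 = a 1 * x 1 := by
  have hsum := sum_range_sub_mul_eq_zero hrow (i := 0) (i' := 1) (by omega) h
  simp only [addTwoEntry_zero_sub_one, sub_mul, ite_mul, zero_mul, sum_sub_distrib, sum_ite_eq',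
    mem_range, if_pos h, if_pos (zero_lt_one.trans h)] at hsum
  linear_combination hsum / 2

lemma kernel_even_step (hrow : ∀ i < n, ∑ j ∈ range n, addTwoEntry a i j * x j = 0)
    {t : ℕ} (h : 2 * t + 2 < n) :
    (a (2 * t) - 1) * x (2 * t) + a (2 * t + 1) * x (2 * t + 1) =
      (a (2 * t + 2) - 1) * x (2 * t + 2) := by
  have hsum := sum_range_sub_mul_eq_zero hrow h (by omega : 2 * t < n)
  simp only [addTwoEntry_even_sub, add_mul, ite_mul, zero_mul, sum_add_distrib, sum_ite_eq',
    mem_range, if_pos h, if_pos (by omega : 2 * t < n), if_pos (by omega : 2 * t + 1 < n)] at hsum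
  linear_combination hsum / 2

lemma kernel_odd_step (hrow : ∀ i < n, ∑ j ∈ range n, addTwoEntry a i j * x j = 0)
    {t : ℕ} (h : 2 * t + 3 < n) :
    a (2 * t + 3) * x (2 * t + 3) =
      a (2 * t + 1) * x (2 * t + 1) + a (2 * t + 2) * x (2 * t + 2) := by
  have hsum := sum_range_sub_mul_eq_zero hrow (by omega : 2 * t + 1 < n) h
  simp only [addTwoEntry_odd_sub, add_mul, sub_mul, ite_mul, zero_mul, sum_add_distrib,
    sum_sub_distrib, sum_ite_eq', mem_range, if_pos h, if_pos (by omega : 2 * t + 1 < n),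
    if_pos (by omega : 2 * t + 2 < n)] at hsum
  linear_combination -hsum / 2

end Kernel

variable {k : ℕ} (α : Fin (2 * k) → ℕ)

lemma add_two_apply (i j : Fin (2 * k - 1)) :
    (Qtilde k α + 2 • (1 : Matrix (Fin (2 * k - 1)) (Fin (2 * k - 1)) ℝ)) i j =
      addTwoEntry (Function.extend Fin.val (fun m => (α m : ℝ)) 0) i j := by
  have hext (m : Fin (2 * k - 1)) :
      Function.extend Fin.val (fun m => (α m : ℝ)) 0 m = α (Fin.castLE (Nat.sub_le _ _) m) :=
    Fin.val_injective.extend_apply _ _ (Fin.castLE _ m)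
  rw [Matrix.add_apply, Matrix.smul_apply, one_apply, two_nsmul]
  simp only [Qtilde, addTwoEntry, of_apply, Fin.ext_iff, hext]
  split_ifs <;> first | omega | ring1

/-- Row `2k - 1` lies just outside the matrix and vanishes on its columns; it serves as the
zero row that closes the odd-row recurrence. -/
lemma sum_range_addTwoEntry_mul_eq_zero {x : Fin (2 * k - 1) → ℝ}
    (hx : (Qtilde k α + 2 • (1 : Matrix (Fin (2 * k - 1)) (Fin (2 * k - 1)) ℝ)) *ᵥ x = 0) :
    ∀ i < 2 * k, ∑ j ∈ range (2 * k),
      addTwoEntry (Function.extend Fin.val (fun m => (α m : ℝ)) 0) i j *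
        Function.extend Fin.val x 0 j = 0 := by
  intro i hi
  rw [← sum_subset (range_subset_range.2 (Nat.sub_le (2 * k) 1)) fun j hj hj' => by
    rw [extend_val_eq_zero_of_le x (by simpa using hj'), mul_zero]]
  rcases lt_or_ge i (2 * k - 1) with hi' | hi'
  · have hrow := congr_fun hx ⟨i, hi'⟩
    simp only [mulVec, dotProduct, add_two_apply, Pi.zero_apply] at hrow
    rw [← Fin.sum_univ_eq_sum_range]
    simpa only [Fin.val_injective.extend_apply] using hrow
  · refine sum_eq_zero fun j hj => ?_
    have hj := mem_range.1 hj
    unfold addTwoEntry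
    split_ifs <;> first | omega | simp

theorem eq_zero_of_add_two_mulVec_eq_zero (hα : ∀ i, 1 ≤ α i) {x : Fin (2 * k - 1) → ℝ}
    (hx : (Qtilde k α + 2 • (1 : Matrix (Fin (2 * k - 1)) (Fin (2 * k - 1)) ℝ)) *ᵥ x = 0) :
    x = 0 := by
  obtain _ | N := k
  · exact funext fun j => absurd j.isLt (by omega)
  have hrow := sum_range_addTwoEntry_mul_eq_zero α hx
  set a := Function.extend Fin.val (fun m => (α m : ℝ)) 0
  set y := Function.extend Fin.val x 0
  have ha : ∀ m < 2 * (N + 1), 1 ≤ a m := fun m hm => by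
    simpa [a, Fin.val_injective.extend_apply _ _ ⟨m, hm⟩] using hα ⟨m, hm⟩
  have hzero := eq_zero_of_coupled_recurrence (N := N) (b := fun t => a (2 * t))
    (u := fun t => y (2 * t)) (z := fun t => a (2 * t + 1) * y (2 * t + 1))
    (fun t ht => ha _ (by omega)) (kernel_zero_eq hrow (by omega))
    (fun t ht => kernel_even_step hrow (by omega)) (fun t ht => kernel_odd_step hrow (by omega))
    (by simp [y, extend_val_eq_zero_of_le x (by omega : 2 * (N + 1) - 1 ≤ 2 * N + 1)])
  funext j
  rw [Pi.zero_apply, ← Fin.val_injective.extend_apply x 0 j]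
  obtain ⟨t, ht | ht⟩ := Nat.even_or_odd' j
  · rw [ht]
    exact (hzero t (by omega)).1
  · rw [ht]
    exact (mul_eq_zero.1 (hzero t (by omega)).2).resolve_left
      (zero_lt_one.trans_le (ha _ (by omega))).ne'

end Qtilde

theorem stmt9_general (k : ℕ) (α : Fin (2*k) → ℕ) (hα : ∀ i, 1 ≤ α i) :
    (¬ ∃ x : Fin (2*k-1) → ℝ, x ≠ 0 ∧ (Qtilde k α).mulVec x = (-2 : ℝ) • x) ∧
    IsUnit (Qtilde k α + 2 • (1 : Matrix (Fin (2*k-1)) (Fin (2*k-1)) ℝ)) := by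
  have hker := fun x => Qtilde.eq_zero_of_add_two_mulVec_eq_zero α hα (x := x)
  refine ⟨fun ⟨x, hx0, hx⟩ => hx0 (hker x ?_), mulVec_injective_iff_isUnit.1 ?_⟩
  · rw [add_mulVec, hx, smul_mulVec, one_mulVec]
    module
  · rw [← coe_mulVecLin, ← LinearMap.ker_eq_bot]
    exact ker_mulVecLin_eq_bot_iff.2 hker

/-- `-2` is not an eigenvalue of `Q̃`; equivalently `Q̃ + 2I` is nonsingular. -/
theorem stmt9 (k : ℕ) (hk : 2 ≤ k) (α : Fin (2*k) → ℕ) (hα : ∀ i, 1 ≤ α i) :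
    (¬ ∃ x : Fin (2*k-1) → ℝ, x ≠ 0 ∧ (Qtilde k α).mulVec x = (-2 : ℝ) • x) ∧
    IsUnit (Qtilde k α + 2 • (1 : Matrix (Fin (2*k-1)) (Fin (2*k-1)) ℝ)) :=
  stmt9_general k α hα
end
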